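/- arXiv:2602.17370 — 3 statements merged into one kernel-verified Lean document; each statement's English description precedes it below -/
import Mathlib

section
/- Let k be a field of characteristic 0 and n ≥ 2 an integer, and let A = kQ/(p₂p₁) be the gentle algebra of the cylinder dissection together with the bilinear map μ̃ determined by μ̃(p₂,p₁) = q̄. Then for every k-bilinear map φ : A × A → A satisfying the Hochschild 2-cocycle identity a·φ(b,c) − φ(a·b,c) + φ(a,b·c) − φ(a,b)·c = 0 for all a,b,c ∈ A, there exist a scalar c₀ ∈ k and a k-linear map f : A → A such that φ(a,b) = c₀·μ̃(a,b) + a·f(b) − f(a·b) + f(a)·b for all a,b ∈ A; moreover the scalar c₀ is uniquely determined by φ. (Equivalently: the second Hochschild cohomology HH²(A,A) is one-dimensional over k, spanned by the class of μ̃.) -/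
/-!
`CylIdx n` indexes the `k`-basis of the gentle algebra `A = kQ/(p₂p₁)` of the cylinder
dissection: the quiver `Q` has vertices `u₀, …, u_{n-1}, v` (encoded as `0, …, n-1, n`),
arrows `q_i : u_{i-1} → u_i` for `1 ≤ i ≤ n-1`, `p₁ : u₀ → v` and `p₂ : v → u_{n-1}`.
The basis of `A` consists of the trivial paths `e x`, the arrows `p₁`, `p₂`, and the
paths `q i j = q_j ⋯ q_i` for `1 ≤ i ≤ j ≤ n-1`.
-/
inductive CylIdx (n : ℕ) : Type
  | e : (x : ℕ) → x ≤ n → CylIdx n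
  | p1 : CylIdx n
  | p2 : CylIdx n
  | q : (i j : ℕ) → 1 ≤ i → i ≤ j → j ≤ n - 1 → CylIdx n

namespace CylIdx

/-- Source vertex of a basis path (vertex `u_x` is encoded `x`, the vertex `v` as `n`). -/
def src {n : ℕ} : CylIdx n → ℕ
  | e x _ => x
  | p1 => 0
  | p2 => n
  | q i _ _ _ _ => i - 1

/-- Target vertex of a basis path. -/
def tgt {n : ℕ} : CylIdx n → ℕ
  | e x _ => x
  | p1 => n
  | p2 => n - 1
  | q _ j _ _ _ => j

end CylIdx

/-- Structure constants of `A = kQ/(p₂p₁)`: the product `b · a` of two basis paths is a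
basis path (the concatenation) or zero; note `p₂ · p₁ = 0` is the gentle relation. -/
def cylMul {n : ℕ} : CylIdx n → CylIdx n → Option (CylIdx n)
  | .e x _, a => if x = a.tgt then some a else none
  | b, .e x _ => if b.src = x then some b else none
  | .q i' j' _ h2 h3, .q i j g1 g2 _ =>
      if h : i' = j + 1 then some (.q i j' g1 (by omega) h3) else none
  | _, _ => none

/-!
Subtracting the coboundaries of `a ↦ ∑ₓ eₓ φ(eₓ, a)` and then of `a ↦ ∑ₓ φ(a, eₓ) eₓ`, where the
`eₓ` are the vertex idempotents, makes the cocycle vanish whenever one argument is a vertex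
idempotent. Such a normalized cocycle `ψ` is balanced over the idempotents, so `ψ(b, a)` vanishes
unless `b` and `a` compose, and it lies in `e_{t(b)} A e_{s(a)}`. For the composable pairs of
non-trivial paths this space is spanned by a single path: `ψ(q_{j'}⋯q_{j+1}, q_j⋯q_i)` is a
multiple `R(i, j, j')` of `q_{j'}⋯q_i`, and `ψ(p₂, p₁)` a multiple `c₀` of `q̄`. The cocycle
identity on three consecutive `q`-paths makes `R` a simplicial 2-cocycle on an interval, hence the
coboundary of some `d`, and the diagonal map `q_j⋯q_i ↦ d(i, j) q_j⋯q_i` absorbs it. The scalar is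
unique because `q̄` lies neither in `p₂A` nor in `Ap₁`, so the `q̄`-coefficient of any coboundary
at `(p₂, p₁)` is zero.
-/

namespace Hochschild

variable {k A : Type*} [CommRing k] [Ring A] [Algebra k A]

def IsCocycle (φ : A →ₗ[k] A →ₗ[k] A) : Prop :=
  ∀ a b c : A, a * φ b c - φ (a * b) c + φ a (b * c) - φ a b * c = 0

def coboundary (f : A →ₗ[k] A) : A →ₗ[k] A →ₗ[k] A :=
  (LinearMap.mul k A).compl₂ f - (LinearMap.mul k A).compr₂ f + LinearMap.mul k A ∘ₗ f

@[simp]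
lemma coboundary_apply (f : A →ₗ[k] A) (a b : A) :
    coboundary f a b = a * f b - f (a * b) + f a * b := rfl

lemma coboundary_add (f g : A →ₗ[k] A) : coboundary (f + g) = coboundary f + coboundary g := by
  ext a b
  simp only [coboundary_apply, LinearMap.add_apply, mul_add, add_mul]
  abel

lemma isCocycle_coboundary (f : A →ₗ[k] A) : IsCocycle (coboundary f) := by
  intro a b c
  simp only [coboundary_apply, mul_assoc, mul_sub, mul_add, sub_mul, add_mul]
  abel

lemma IsCocycle.sub {φ ψ : A →ₗ[k] A →ₗ[k] A} (hφ : IsCocycle φ) (hψ : IsCocycle ψ) :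
    IsCocycle (φ - ψ) := by
  intro a b c
  have h := congrArg₂ (· - ·) (hφ a b c) (hψ a b c)
  simp only [sub_zero] at h
  rw [← h]
  simp only [LinearMap.sub_apply, mul_sub, sub_mul]
  abel

section Balanced

variable {φ : A →ₗ[k] A →ₗ[k] A}

lemma IsCocycle.apply_mul_left (hφ : IsCocycle φ) {u : A} (hu : ∀ b, φ u b = 0) (a b : A) :
    φ (u * a) b = u * φ a b := by
  have h := hφ u a b
  rw [hu, hu, zero_mul, sub_zero, add_zero, sub_eq_zero] at h
  exact h.symm

lemma IsCocycle.apply_mul_right (hφ : IsCocycle φ) {u : A} (hu : ∀ a, φ a u = 0) (a b : A) :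
    φ a (b * u) = φ a b * u := by
  have h := hφ a b u
  rwa [hu, hu, mul_zero, sub_zero, zero_add, sub_eq_zero] at h

lemma IsCocycle.apply_mul_mid (hφ : IsCocycle φ) {u : A} (hl : ∀ b, φ u b = 0)
    (hr : ∀ a, φ a u = 0) (a b : A) : φ (a * u) b = φ a (u * b) := by
  have h := hφ a u b
  rwa [hl, hr, mul_zero, zero_mul, sub_zero, zero_sub, neg_add_eq_zero] at h

end Balanced

def IsNormalized {ι : Type*} (e : ι → A) (φ : A →ₗ[k] A →ₗ[k] A) : Prop :=
  ∀ i a, φ (e i) a = 0 ∧ φ a (e i) = 0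

section Idempotents

variable {ι : Type*} [Fintype ι] [DecidableEq ι] {e : ι → A}
  {φ : A →ₗ[k] A →ₗ[k] A}

lemma sum_apply_mul_orthogonal_left {M : Type*} [AddCommMonoid M]
    (he : ∀ i j, e i * e j = if i = j then e i else 0) (F : ι → A → M) (hF : ∀ i, F i 0 = 0)
    (j : ι) : ∑ i, F i (e i * e j) = F j (e j) := by
  rw [Finset.sum_eq_single j (fun i _ hij => by rw [he, if_neg hij, hF]) (by simp), he, if_pos rfl]

lemma sum_apply_mul_orthogonal_right {M : Type*} [AddCommMonoid M]
    (he : ∀ i j, e i * e j = if i = j then e i else 0) (F : ι → A → M) (hF : ∀ i, F i 0 = 0)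
    (j : ι) : ∑ i, F i (e j * e i) = F j (e j) := by
  rw [Finset.sum_eq_single j (fun i _ hij => by rw [he, if_neg (Ne.symm hij), hF]) (by simp), he,
    if_pos rfl]

lemma IsCocycle.exists_coboundary_left_normalized (hφ : IsCocycle φ) (he1 : ∑ i, e i = 1)
    (he : ∀ i j, e i * e j = if i = j then e i else 0) :
    ∃ g : A →ₗ[k] A, ∀ i a, (φ - coboundary g) (e i) a = 0 := by
  let g : A →ₗ[k] A := ∑ i, LinearMap.mulLeft k (e i) ∘ₗ φ (e i)
  have hg : ∀ a, g a = ∑ i, e i * φ (e i) a := fun a => by simp [g, LinearMap.sum_apply]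
  refine ⟨g, fun j b => ?_⟩
  have hleft : e j * g b = e j * φ (e j) b := by
    simp only [hg, Finset.mul_sum, ← mul_assoc]
    exact sum_apply_mul_orthogonal_right he (fun i x => x * φ (e i) b) (by simp) j
  have hmid : g (e j * b) = e j * φ (e j) b - φ (e j) b + g (e j) * b := by
    have hexp : ∀ i, e i * φ (e i) (e j * b) =
        e i * φ (e i * e j) b - e i * φ (e j) b + e i * φ (e i) (e j) * b := by
      intro i
      have h : φ (e i) (e j * b) = φ (e i * e j) b - e i * φ (e j) b + φ (e i) (e j) * b := by
        rw [← sub_eq_zero, ← hφ (e i) (e j) b]; abel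
      rw [h, mul_add, mul_sub, ← mul_assoc, he i i, if_pos rfl, mul_assoc]
    simp only [hg, hexp, Finset.sum_add_distrib, Finset.sum_sub_distrib, ← Finset.sum_mul, he1,
      one_mul]
    rw [sum_apply_mul_orthogonal_left he (fun i x => e i * φ x b) (by simp) j]
  rw [LinearMap.sub_apply, LinearMap.sub_apply, coboundary_apply, hleft, hmid]
  abel

lemma IsCocycle.exists_coboundary_normalized_of_left (hφ : IsCocycle φ) (he1 : ∑ i, e i = 1)
    (he : ∀ i j, e i * e j = if i = j then e i else 0) (hl : ∀ i a, φ (e i) a = 0) :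
    ∃ h : A →ₗ[k] A, IsNormalized e (φ - coboundary h) := by
  let h : A →ₗ[k] A := ∑ i, LinearMap.mulRight k (e i) ∘ₗ φ.flip (e i)
  have hh : ∀ a, h a = ∑ i, φ a (e i) * e i := fun a => by simp [h, LinearMap.sum_apply]
  have hh_e : ∀ j, h (e j) = 0 := fun j => by simp [hh, hl]
  refine ⟨h, fun j a => ⟨?_, ?_⟩⟩
  · have hmid : h (e j * a) = e j * h a := by
      simp only [hh, hφ.apply_mul_left (hl j), Finset.mul_sum, mul_assoc]
    simp [hl, hh_e, hmid]
  · have hmid : h (a * e j) = φ a (e j) * e j - φ a (e j) := by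
      have hexp : ∀ i, φ (a * e j) (e i) * e i = φ a (e j * e i) * e i - φ a (e j) * e i := by
        intro i
        have hc := hφ a (e j) (e i)
        rw [hl, mul_zero, zero_sub, add_sub_assoc, neg_add_eq_zero] at hc
        rw [hc, sub_mul, mul_assoc, he i i, if_pos rfl]
      simp only [hh, hexp, Finset.sum_sub_distrib, ← Finset.mul_sum, he1, mul_one]
      rw [sum_apply_mul_orthogonal_right he (fun i x => φ a x * e i) (by simp) j]
    have hright : h a * e j = φ a (e j) * e j := by
      simp only [hh, Finset.sum_mul, mul_assoc]
      exact sum_apply_mul_orthogonal_left he (fun i x => φ a (e i) * x) (by simp) j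
    rw [LinearMap.sub_apply, LinearMap.sub_apply, coboundary_apply, hh_e, mul_zero, hmid, hright]
    abel

lemma IsCocycle.exists_coboundary_normalized (hφ : IsCocycle φ) (he1 : ∑ i, e i = 1)
    (he : ∀ i j, e i * e j = if i = j then e i else 0) :
    ∃ f : A →ₗ[k] A, IsCocycle (φ - coboundary f) ∧ IsNormalized e (φ - coboundary f) := by
  obtain ⟨g, hg⟩ := hφ.exists_coboundary_left_normalized he1 he
  have hφg := hφ.sub (isCocycle_coboundary g)
  obtain ⟨h, hh⟩ := hφg.exists_coboundary_normalized_of_left he1 he hg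
  have hgh : φ - coboundary (g + h) = φ - coboundary g - coboundary h := by
    rw [coboundary_add]; abel
  exact ⟨g + h, hgh ▸ hφg.sub (isCocycle_coboundary h), hgh ▸ hh⟩

end Idempotents

lemma coboundary_constr_smul_apply_basis {ι : Type*} (B : Module.Basis ι k A) (w : ι → k)
    (b a : ι) :
    coboundary (B.constr k fun c => w c • B c) (B b) (B a) =
      (w b + w a) • (B b * B a) - B.constr k (fun c => w c • B c) (B b * B a) := by
  simp only [coboundary_apply, Module.Basis.constr_basis, mul_smul_comm, smul_mul_assoc, add_smul]
  abel

end Hochschild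

lemma exists_eq_simplicial_coboundary {M : Type*} [AddCommGroup M] (N : ℕ)
    (R : ℕ → ℕ → ℕ → M)
    (hR : ∀ i j j' j'', 1 ≤ i → i ≤ j → j < j' → j' < j'' → j'' ≤ N →
      R i j j' - R i j j'' + R i j' j'' - R (j + 1) j' j'' = 0) :
    ∃ d : ℕ → ℕ → M, ∀ i j j', 1 ≤ i → i ≤ j → j < j' → j' ≤ N →
      R i j j' = d i j + d (j + 1) j' - d i j' := by
  refine ⟨fun i j => if i = 1 then 0 else R 1 (i - 1) j, fun i j j' hi hij hjj' hj' => ?_⟩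
  rcases eq_or_lt_of_le hi with rfl | hi
  · simp [show j ≠ 0 by omega]
  · have h := hR 1 (i - 1) j j' le_rfl (by omega) (by omega) hjj' hj'
    rw [Nat.sub_add_cancel hi.le] at h
    simp only [hi.ne', if_false, show j + 1 ≠ 1 by omega, Nat.add_sub_cancel]
    rw [← sub_eq_zero, ← neg_eq_zero, ← h]
    abel

namespace CylIdx

variable {n : ℕ}

lemma src_le (c : CylIdx n) : c.src ≤ n := by
  cases c <;> simp only [src] <;> omega

lemma tgt_le (c : CylIdx n) : c.tgt ≤ n := by
  cases c <;> simp only [tgt] <;> omega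

variable (n) in
/-- The path `q_j ⋯ q_i`, or a junk value when `¬ (1 ≤ i ≤ j ≤ n - 1)`. -/
def qPath (i j : ℕ) : CylIdx n :=
  if h : 1 ≤ i ∧ i ≤ j ∧ j ≤ n - 1 then q i j h.1 h.2.1 h.2.2 else p1

lemma qPath_eq {i j : ℕ} (hi : 1 ≤ i) (hij : i ≤ j) (hj : j ≤ n - 1) :
    qPath n i j = q i j hi hij hj :=
  dif_pos ⟨hi, hij, hj⟩

lemma eq_qPath_of_tgt_of_src {c : CylIdx n} {i j : ℕ} (hi : 1 ≤ i) (hij : i ≤ j)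
    (hj : j ≤ n - 1) (ht : c.tgt = j) (hs : c.src = i - 1) : c = qPath n i j := by
  rw [qPath_eq hi hij hj]
  cases c with
  | q i' j' _ _ _ =>
    simp only [tgt, src] at ht hs
    obtain rfl : i' = i := by omega
    subst ht
    rfl
  | _ => simp only [tgt, src] at ht hs; omega

lemma tgt_qPath {i j : ℕ} (hi : 1 ≤ i) (hij : i ≤ j) (hj : j ≤ n - 1) :
    (qPath n i j).tgt = j := by
  rw [qPath_eq hi hij hj]; rfl

lemma src_qPath {i j : ℕ} (hi : 1 ≤ i) (hij : i ≤ j) (hj : j ≤ n - 1) :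
    (qPath n i j).src = i - 1 := by
  rw [qPath_eq hi hij hj]; rfl

lemma composable_cases (hn : 2 ≤ n) {b a : CylIdx n} (h : b.src = a.tgt) :
    (∃ x hx, b = e x hx) ∨ (∃ x hx, a = e x hx) ∨ (b = p2 ∧ a = p1) ∨
      ∃ i j j', 1 ≤ i ∧ i ≤ j ∧ j < j' ∧ j' ≤ n - 1 ∧ b = qPath n (j + 1) j' ∧ a = qPath n i j := by
  revert h
  rcases b with ⟨x, hx⟩ | _ | _ | ⟨i', j', hi', -, hj'⟩ <;>
    rcases a with ⟨y, hy⟩ | _ | _ | ⟨i, j, hi, hij, hj⟩ <;>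
    intro h <;> simp only [src, tgt] at h <;>
    first
    | exact Or.inl ⟨_, _, rfl⟩
    | exact Or.inr (Or.inl ⟨_, _, rfl⟩)
    | exact Or.inr (Or.inr (Or.inl ⟨rfl, rfl⟩))
    | omega
    | skip
  obtain rfl : i' = j + 1 := by omega
  exact Or.inr (Or.inr (Or.inr ⟨i, j, j', hi, hij, by omega, hj', (qPath_eq ..).symm,
    (qPath_eq ..).symm⟩))

def qWeight {M : Type*} [Zero M] (d : ℕ → ℕ → M) : CylIdx n → M
  | q i j _ _ _ => d i j
  | _ => 0

lemma qWeight_qPath {M : Type*} [Zero M] (d : ℕ → ℕ → M) {i j : ℕ} (hi : 1 ≤ i) (hij : i ≤ j)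
    (hj : j ≤ n - 1) : qWeight d (qPath n i j) = d i j := by
  rw [qPath_eq hi hij hj]; rfl

end CylIdx

open CylIdx Hochschild

section CylinderAlgebra

variable {k A : Type*} [CommRing k] [Ring A] [Algebra k A] {n : ℕ}

def IsCylinderBasis (B : Module.Basis (CylIdx n) k A) : Prop :=
  ∀ b a, B b * B a = (cylMul b a).elim 0 B

noncomputable def vertexIdem (B : Module.Basis (CylIdx n) k A) (x : Finset.range (n + 1)) : A :=
  B (e x.1 (Nat.lt_succ_iff.mp (Finset.mem_range.mp x.2)))

noncomputable def pathCoeff (B : Module.Basis (CylIdx n) k A) (ψ : A →ₗ[k] A →ₗ[k] A)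
    (i j j' : ℕ) : k :=
  B.repr (ψ (B (qPath n (j + 1) j')) (B (qPath n i j))) (qPath n i j')

namespace IsCylinderBasis

variable {B : Module.Basis (CylIdx n) k A} (hB : IsCylinderBasis B)
include hB

lemma e_mul (x : ℕ) (hx : x ≤ n) (c : CylIdx n) :
    B (e x hx) * B c = if x = c.tgt then B c else 0 := by
  rw [hB]; cases c <;> simp only [cylMul] <;> split_ifs <;> rfl

lemma mul_e (c : CylIdx n) (x : ℕ) (hx : x ≤ n) :
    B c * B (e x hx) = if c.src = x then B c else 0 := by
  have hc : cylMul c (e x hx) = if c.src = x then some c else none := by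
    rcases c with ⟨y, hy⟩ | _ | _ | _ <;> simp only [cylMul, src, tgt]
    by_cases h : y = x
    · subst h; simp
    · simp [h]
  rw [hB, hc]
  split_ifs <;> rfl

lemma e_tgt_mul (c : CylIdx n) : B (e c.tgt c.tgt_le) * B c = B c := by
  rw [hB.e_mul, if_pos rfl]

lemma mul_e_src (c : CylIdx n) : B c * B (e c.src c.src_le) = B c := by
  rw [hB.mul_e, if_pos rfl]

lemma mul_eq_zero_of_src_ne_tgt {b a : CylIdx n} (h : b.src ≠ a.tgt) : B b * B a = 0 := by
  rw [← hB.mul_e_src b, mul_assoc, hB.e_mul, if_neg h, mul_zero]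

lemma qPath_mul_qPath {i j j' : ℕ} (hi : 1 ≤ i) (hij : i ≤ j) (hjj' : j < j') (hj' : j' ≤ n - 1) :
    B (qPath n (j + 1) j') * B (qPath n i j) = B (qPath n i j') := by
  rw [qPath_eq (by omega) hjj' hj', qPath_eq hi hij (by omega), qPath_eq hi (by omega) hj', hB]
  simp [cylMul]

lemma vertexIdem_mul (x y : Finset.range (n + 1)) :
    vertexIdem B x * vertexIdem B y = if x = y then vertexIdem B x else 0 := by
  rw [vertexIdem, vertexIdem, hB.e_mul]
  simp only [tgt, Subtype.ext_iff]
  split_ifs with h <;> simp [h]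

lemma e_mul_mul_e_eq_repr_smul {t s : ℕ} (ht : t ≤ n) (hs : s ≤ n) {c : CylIdx n}
    (hc : ∀ d : CylIdx n, d.tgt = t → d.src = s → d = c) (hct : c.tgt = t) (hcs : c.src = s)
    (v : A) : B (e t ht) * v * B (e s hs) = B.repr v c • B c := by
  have key : LinearMap.mulRight k (B (e s hs)) ∘ₗ LinearMap.mulLeft k (B (e t ht)) =
      (B.coord c).smulRight (B c) := by
    refine B.ext fun d => ?_
    simp only [LinearMap.comp_apply, LinearMap.mulLeft_apply, LinearMap.mulRight_apply,
      LinearMap.smulRight_apply, Module.Basis.coord_apply, Module.Basis.repr_self, hB.e_mul,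
      ite_mul, zero_mul, hB.mul_e]
    by_cases hdc : d = c
    · subst hdc; simp [hct, hcs]
    · have : ¬(t = d.tgt ∧ d.src = s) := fun h => hdc (hc d h.1.symm h.2)
      rw [Finsupp.single_eq_of_ne (Ne.symm hdc), zero_smul]
      split_ifs with h1 h2
      exacts [absurd ⟨h1, h2⟩ this, rfl, rfl]
  exact LinearMap.congr_fun key v

lemma p2_mul_p1 : B p2 * B p1 = 0 := hB _ _

lemma p2_mul (w : A) : B p2 * w = B.repr w (e n le_rfl) • B p2 := by
  have key : LinearMap.mulLeft k (B p2) = (B.coord (e n le_rfl)).smulRight (B p2) := by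
    refine B.ext fun d => ?_
    classical
    rcases d with ⟨x, hx⟩ | _ | _ | _ <;> simp [hB _ _, cylMul, src, Finsupp.single_apply]
    by_cases hx : x = n
    · subst hx; simp
    · simp [hx, Ne.symm hx]
  exact LinearMap.congr_fun key w

lemma mul_p1 (w : A) : w * B p1 = B.repr w (e n le_rfl) • B p1 := by
  have key : LinearMap.mulRight k (B p1) = (B.coord (e n le_rfl)).smulRight (B p1) := by
    refine B.ext fun d => ?_
    classical
    rcases d with ⟨x, hx⟩ | _ | _ | _ <;> simp [hB _ _, cylMul, tgt, Finsupp.single_apply]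
    by_cases hx : x = n
    · subst hx; simp
    · simp [hx]
  exact LinearMap.congr_fun key w

lemma repr_apply_p2_p1_eq (hn : 2 ≤ n) {μ φ : A →ₗ[k] A →ₗ[k] A}
    (hμ1 : μ (B p2) (B p1) = B (qPath n 1 (n - 1))) {c : k} {f : A →ₗ[k] A}
    (hφ : ∀ a b, φ a b = c • μ a b + a * f b - f (a * b) + f a * b) :
    B.repr (φ (B p2) (B p1)) (qPath n 1 (n - 1)) = c := by
  have hq : qPath n 1 (n - 1) = q 1 (n - 1) le_rfl (by omega) le_rfl := qPath_eq ..
  rw [hφ, hμ1, hB.p2_mul_p1, map_zero, sub_zero, hB.p2_mul, hB.mul_p1]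
  simp [hq]

section NormalizedCocycle

variable {ψ : A →ₗ[k] A →ₗ[k] A} (hψ : IsCocycle ψ) (hl : ∀ x hx a, ψ (B (e x hx)) a = 0)
  (hr : ∀ x hx a, ψ a (B (e x hx)) = 0)
include hψ hl hr

lemma apply_eq_e_mul_mul_e (b a : CylIdx n) :
    ψ (B b) (B a) = B (e b.tgt b.tgt_le) * ψ (B b) (B a) * B (e a.src a.src_le) := by
  rw [← hψ.apply_mul_left (hl _ _), hB.e_tgt_mul, ← hψ.apply_mul_right (hr _ _), hB.mul_e_src]

lemma apply_eq_zero_of_src_ne_tgt {b a : CylIdx n} (h : b.src ≠ a.tgt) : ψ (B b) (B a) = 0 := by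
  rw [← hB.mul_e_src b, hψ.apply_mul_mid (hl _ _) (hr _ _), hB.e_mul, if_neg h, map_zero]

lemma apply_eq_repr_smul {b a c : CylIdx n}
    (hc : ∀ d : CylIdx n, d.tgt = b.tgt → d.src = a.src → d = c) (hct : c.tgt = b.tgt)
    (hcs : c.src = a.src) :
    ψ (B b) (B a) = B.repr (ψ (B b) (B a)) c • B c :=
  (hB.apply_eq_e_mul_mul_e hψ hl hr b a).trans (hB.e_mul_mul_e_eq_repr_smul _ _ hc hct hcs _)

lemma apply_qPath_qPath {i j j' : ℕ} (hi : 1 ≤ i) (hij : i ≤ j) (hjj' : j < j') (hj' : j' ≤ n - 1) :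
    ψ (B (qPath n (j + 1) j')) (B (qPath n i j)) = pathCoeff B ψ i j j' • B (qPath n i j') := by
  have ht : (qPath n (j + 1) j').tgt = j' := tgt_qPath (by omega) hjj' hj'
  have hs : (qPath n i j).src = i - 1 := src_qPath hi hij (by omega)
  refine hB.apply_eq_repr_smul hψ hl hr (fun d hdt hds => ?_) ?_ ?_
  · exact eq_qPath_of_tgt_of_src hi (by omega) hj' (hdt.trans ht) (hds.trans hs)
  · rw [ht, tgt_qPath hi (by omega) hj']
  · rw [hs, src_qPath hi (by omega) hj']

lemma apply_p2_p1 (hn : 2 ≤ n) :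
    ψ (B p2) (B p1) = B.repr (ψ (B p2) (B p1)) (qPath n 1 (n - 1)) • B (qPath n 1 (n - 1)) := by
  refine hB.apply_eq_repr_smul hψ hl hr (fun d hdt hds => ?_) ?_ ?_
  · exact eq_qPath_of_tgt_of_src le_rfl (by omega) le_rfl hdt hds
  · rw [tgt_qPath le_rfl (by omega) le_rfl]; rfl
  · rw [src_qPath le_rfl (by omega) le_rfl]; rfl

lemma pathCoeff_cocycle {i j j' j'' : ℕ} (hi : 1 ≤ i) (hij : i ≤ j) (hjj' : j < j')
    (hj'j'' : j' < j'') (hj'' : j'' ≤ n - 1) :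
    pathCoeff B ψ i j j' - pathCoeff B ψ i j j'' + pathCoeff B ψ i j' j'' -
      pathCoeff B ψ (j + 1) j' j'' = 0 := by
  have h := hψ (B (qPath n (j' + 1) j'')) (B (qPath n (j + 1) j')) (B (qPath n i j))
  rw [hB.apply_qPath_qPath hψ hl hr hi hij hjj' (by omega),
    hB.qPath_mul_qPath (by omega) (by omega) hj'j'' hj'',
    hB.apply_qPath_qPath hψ hl hr hi hij (by omega) hj'',
    hB.qPath_mul_qPath hi hij hjj' (by omega),
    hB.apply_qPath_qPath hψ hl hr hi (by omega) hj'j'' hj'',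
    hB.apply_qPath_qPath hψ hl hr (by omega) (by omega) hj'j'' hj'',
    mul_smul_comm, hB.qPath_mul_qPath hi (by omega) hj'j'' hj'',
    smul_mul_assoc, hB.qPath_mul_qPath hi hij (by omega) hj'', ← sub_smul, ← add_smul,
    ← sub_smul] at h
  simpa using congrArg (B.repr · (qPath n i j'')) h

lemma exists_eq_smul_add_coboundary (hn : 2 ≤ n) {μ : A →ₗ[k] A →ₗ[k] A}
    (hμ1 : μ (B p2) (B p1) = B (qPath n 1 (n - 1)))
    (hμ0 : ∀ b a : CylIdx n, ¬(b = p2 ∧ a = p1) → μ (B b) (B a) = 0) :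
    ∃ (c : k) (f : A →ₗ[k] A), ψ = c • μ + coboundary f := by
  obtain ⟨d, hd⟩ := exists_eq_simplicial_coboundary (n - 1) (pathCoeff B ψ)
    fun i j j' j'' => hB.pathCoeff_cocycle hψ hl hr
  refine ⟨B.repr (ψ (B p2) (B p1)) (qPath n 1 (n - 1)), B.constr k fun c => qWeight d c • B c,
    B.ext fun b => B.ext fun a => ?_⟩
  rw [LinearMap.add_apply, LinearMap.smul_apply, LinearMap.add_apply, LinearMap.smul_apply,
    coboundary_constr_smul_apply_basis]
  by_cases h : b.src = a.tgt
  · rcases composable_cases hn h with ⟨x, hx, rfl⟩ | ⟨x, hx, rfl⟩ | ⟨rfl, rfl⟩ |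
      ⟨i, j, j', hi, hij, hjj', hj', rfl, rfl⟩
    · rw [hl, hμ0 _ _ (by simp), hB.e_mul, if_pos (show x = a.tgt from h)]
      simp [qWeight]
    · rw [hr, hμ0 _ _ (by simp), hB.mul_e, if_pos (show b.src = x from h)]
      simp [qWeight]
    · rw [hB.apply_p2_p1 hψ hl hr hn, hμ1, hB.p2_mul_p1]
      simp
    · rw [hB.apply_qPath_qPath hψ hl hr hi hij hjj' hj', hB.qPath_mul_qPath hi hij hjj' hj',
        hμ0 _ _ (by rw [qPath_eq (by omega) hjj' hj']; simp), hd i j j' hi hij hjj' hj',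
        Module.Basis.constr_basis, qWeight_qPath d (by omega) hjj' hj',
        qWeight_qPath d hi hij (by omega), qWeight_qPath d hi (by omega) hj']
      module
  · rw [hB.apply_eq_zero_of_src_ne_tgt hψ hl hr h, hμ0 _ _ (by rintro ⟨rfl, rfl⟩; exact h rfl),
      hB.mul_eq_zero_of_src_ne_tgt h]
    simp

end NormalizedCocycle

end IsCylinderBasis

end CylinderAlgebra

/-- **HH²(A,A) is one-dimensional, spanned by the class of μ̃.**
Every Hochschild 2-cocycle `φ` of the gentle algebra `A = kQ/(p₂p₁)` of the cylinder
dissection differs from a unique scalar multiple of `μ̃` (the bilinear map with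
`μ̃(p₂,p₁) = q̄ = q_{n-1}⋯q₁` and vanishing on all other pairs of basis paths) by a
Hochschild 2-coboundary. -/
theorem cylinder_HH2_one_dimensional
    (k : Type*) [Field k]
    (n : ℕ) (hn : 2 ≤ n)
    (A : Type*) [Ring A] [Algebra k A]
    (B : Module.Basis (CylIdx n) k A)
    (hmul : ∀ b a : CylIdx n, B b * B a = (cylMul b a).elim 0 B)
    (hone : (1 : A) = ∑ x ∈ (Finset.range (n + 1)).attach,
      B (.e x.1 (by have := Finset.mem_range.mp x.2; omega)))
    (μ : A →ₗ[k] A →ₗ[k] A)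
    (hμ1 : μ (B .p2) (B .p1) = B (.q 1 (n - 1) le_rfl (by omega) le_rfl))
    (hμ0 : ∀ b a : CylIdx n, ¬(b = .p2 ∧ a = .p1) → μ (B b) (B a) = 0)
    (φ : A →ₗ[k] A →ₗ[k] A)
    (hφ : ∀ a b c : A, a * φ b c - φ (a * b) c + φ a (b * c) - φ a b * c = 0) :
    ∃! c₀ : k, ∃ f : A →ₗ[k] A,
      ∀ a b : A, φ a b = c₀ • μ a b + a * f b - f (a * b) + f a * b := by
  have hB : IsCylinderBasis B := hmul
  have hμ1' : μ (B p2) (B p1) = B (qPath n 1 (n - 1)) := by rwa [qPath_eq le_rfl (by omega) le_rfl]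
  obtain ⟨g, hψ, hψn⟩ := IsCocycle.exists_coboundary_normalized (e := vertexIdem B) hφ
    (by rw [Finset.univ_eq_attach]; exact hone.symm) hB.vertexIdem_mul
  have hvertex (x : ℕ) (hx : x ≤ n) : x ∈ Finset.range (n + 1) := Finset.mem_range.2 (by omega)
  obtain ⟨c₀, f, hf⟩ := hB.exists_eq_smul_add_coboundary hψ
    (fun x hx => (hψn ⟨x, hvertex x hx⟩ · |>.1)) (fun x hx => (hψn ⟨x, hvertex x hx⟩ · |>.2))
    hn hμ1' hμ0
  have hφ_eq : φ = c₀ • μ + coboundary (f + g) := by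
    rw [coboundary_add, ← add_assoc, ← hf]
    abel
  have hexists : ∀ a b, φ a b = c₀ • μ a b + a * (f + g) b - (f + g) (a * b) + (f + g) a * b := by
    intro a b
    simp only [hφ_eq, LinearMap.add_apply, LinearMap.smul_apply, coboundary_apply]
    abel
  refine ⟨c₀, ⟨f + g, hexists⟩, fun c₁ ⟨f₁, hf₁⟩ => ?_⟩
  rw [← hB.repr_apply_p2_p1_eq hn hμ1' hf₁, hB.repr_apply_p2_p1_eq hn hμ1' hexists]
end

section
/- Let k be a field of characteristic 0 and n ≥ 2 an integer. Let B be the skew-gentle algebra given by the quiver with vertices w₀, …, w_{n−1}, a loop ε at w₀ and a linear chain of arrows r_i : w_{i−1} → w_i (1 ≤ i ≤ n−1), subject to the relations ε² = e_{w₀} and r_{i+1}r_i = 0 for 1 ≤ i ≤ n−2. Then B is isomorphic as a k-algebra to the path algebra D of a linearly oriented quiver of type D_{n+1} modulo all paths of length two; an isomorphism is given by e_{w₀} ↦ e_{w₀⁺} + e_{w₀⁻}, ε ↦ e_{w₀⁺} − e_{w₀⁻}, r₁ ↦ a⁺ + a⁻, and the identity on the remaining idempotents and arrows. -/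
/-- `BIdx n` indexes the `k`-basis of the skew-gentle algebra `B`: the quiver has
vertices `w₀, …, w_{n-1}` (encoded as `0, …, n-1`), a loop `ε` at `w₀` and arrows
`r_i : w_{i-1} → w_i` for `1 ≤ i ≤ n-1`, with relations `ε² = e_{w₀}` and
`r_{i+1} r_i = 0`.  A basis element `⟨i, j, s⟩` records the residue class of the path
`r_j ⋯ r_{i+1} ∘ ε^s` from `w_i` to `w_j` (so necessarily `j ≤ i + 1` by the radical
square zero relations on the `r`'s, and `s = 1` forces `i = 0`): the trivial paths are
`⟨x, x, 0⟩`, the loop `ε` is `⟨0, 0, 1⟩`, the arrow `r_i` is `⟨i-1, i, 0⟩`, and the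
path `r₁ε` is `⟨0, 1, 1⟩`. -/
structure BIdx (n : ℕ) : Type where
  i : ℕ
  j : ℕ
  s : ℕ
  h : i ≤ j ∧ j ≤ i + 1 ∧ j ≤ n - 1 ∧ s ≤ 1 ∧ (s = 1 → i = 0)

/-- Structure constants of the skew-gentle algebra `B`: the product `b · a` of two basis
paths is concatenation, using `ε² = e_{w₀}` (so the `ε`-exponents add modulo `2`), and is
zero if the paths are not composable or the concatenation contains some `r_{i+1} r_i`. -/
def bMul {n : ℕ} (b a : BIdx n) : Option (BIdx n) :=
  if h : b.i = a.j ∧ (a.i = a.j ∨ b.i = b.j) then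
    some ⟨a.i, b.j, (a.s + b.s) % 2, by have ha := a.h; have hb := b.h; omega⟩
  else none

/-- `DIdx n` indexes the `k`-basis of the path algebra `D` of the linearly oriented quiver
of type `D_{n+1}` modulo all paths of length two.  The vertices `w₁, …, w_{n-1}` are
encoded as `1, …, n-1`, the vertex `w₀⁺` as `n` and the vertex `w₀⁻` as `n+1`.  A basis
element is a pair `(i, j)` recording source and target: the trivial paths are the pairs
`(x, x)` for a vertex `x`; the arrow `a⁺ : w₀⁺ → w₁` is `(n, 1)`, the arrow
`a⁻ : w₀⁻ → w₁` is `(n+1, 1)`, and the arrow `r_i : w_{i-1} → w_i` (for `2 ≤ i ≤ n-1`)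
is `(i-1, i)`. -/
structure DIdx (n : ℕ) : Type where
  i : ℕ
  j : ℕ
  h : (i = j ∧ ((1 ≤ i ∧ i ≤ n - 1) ∨ i = n ∨ i = n + 1)) ∨
      (j = 1 ∧ (i = n ∨ i = n + 1)) ∨
      (2 ≤ j ∧ j ≤ n - 1 ∧ i = j - 1)

/-- Structure constants of `D`: products with trivial paths, all other products
(in particular all length-two paths) being zero. -/
def dMul {n : ℕ} (b a : DIdx n) : Option (DIdx n) :=
  if h : b.i = a.j ∧ (a.i = a.j ∨ b.i = b.j) then
    some ⟨a.i, b.j, by have ha := a.h; have hb := b.h; omega⟩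
  else none

/-!
Since `char k ≠ 2`, the loop `ε` with `ε² = e_{w₀}` splits `e_{w₀}` into the orthogonal
idempotents `(e_{w₀} ± ε)/2`, and `r₁` into `r₁ (e_{w₀} ± ε)/2`; these play the roles of
`e_{w₀^±}` and `a^±`.  Dually, `Φ` sends a basis path `p ε^s` of `B` starting at `w₀` to
`p⁺ + (-1)^s p⁻`, the sum of its lifts through `w₀⁺` and `w₀⁻`, and every other basis path
to itself.  `Φ` is multiplicative on basis paths because a lift through `w₀⁺` times a
lift through `w₀⁻` vanishes, while the signs multiply as the exponents of `ε` add modulo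
`2`; its inverse halves the sums and differences of the two lifts.
-/

theorem LinearMap.map_mul_of_basis {ι R A A' : Type*} [CommSemiring R] [Semiring A]
    [Semiring A'] [Algebra R A] [Algebra R A'] (b : Module.Basis ι R A) (f : A →ₗ[R] A')
    (h : ∀ i j, f (b i * b j) = f (b i) * f (b j)) (x y : A) : f (x * y) = f x * f y :=
  (LinearMap.map_mul_iff f).2 (b.ext fun i => b.ext fun j => h i j) x y

/-- A multiplicative linear bijection preserves `1` automatically. -/
noncomputable def LinearEquiv.toAlgEquivOfBasis {ι R A A' : Type*} [CommSemiring R]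
    [Semiring A] [Semiring A'] [Algebra R A] [Algebra R A'] (l : A ≃ₗ[R] A')
    (b : Module.Basis ι R A) (h : ∀ i j, l (b i * b j) = l (b i) * l (b j)) : A ≃ₐ[R] A' :=
  have hmul := LinearMap.map_mul_of_basis b l.toLinearMap h
  AlgEquiv.ofLinearEquiv l (MulEquiv.mk' l.toEquiv hmul).map_one hmul

namespace SkewGentle

variable {k : Type*} [Field k] {n : ℕ}

section D

variable {D : Type*} [Ring D] [Algebra k D] (BD : Module.Basis (DIdx n) k D)

/-- The basis `BD` extended by zero to all pairs of naturals, so that the multiplication rule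
`dPath_mul_dPath` holds without side conditions. -/
noncomputable def dPath (i j : ℕ) : D :=
  if h : (i = j ∧ ((1 ≤ i ∧ i ≤ n - 1) ∨ i = n ∨ i = n + 1)) ∨
      (j = 1 ∧ (i = n ∨ i = n + 1)) ∨ (2 ≤ j ∧ j ≤ n - 1 ∧ i = j - 1) then BD ⟨i, j, h⟩
  else 0

theorem basis_eq_dPath {i j : ℕ} (h) : BD ⟨i, j, h⟩ = dPath BD i j := by
  rw [dPath, dif_pos h]

variable {BD} in
theorem dPath_mul_dPath (hD : ∀ b a : DIdx n, BD b * BD a = (dMul b a).elim 0 BD)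
    (i j i' j' : ℕ) :
    dPath BD i j * dPath BD i' j' = if i = j' ∧ (i' = j' ∨ i = j) then dPath BD i' j else 0 := by
  unfold dPath
  by_cases h : (i = j ∧ ((1 ≤ i ∧ i ≤ n - 1) ∨ i = n ∨ i = n + 1)) ∨
      (j = 1 ∧ (i = n ∨ i = n + 1)) ∨ (2 ≤ j ∧ j ≤ n - 1 ∧ i = j - 1)
  · by_cases h' : (i' = j' ∧ ((1 ≤ i' ∧ i' ≤ n - 1) ∨ i' = n ∨ i' = n + 1)) ∨
        (j' = 1 ∧ (i' = n ∨ i' = n + 1)) ∨ (2 ≤ j' ∧ j' ≤ n - 1 ∧ i' = j' - 1)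
    · rw [dif_pos h, dif_pos h', hD]
      dsimp only [dMul]
      split_ifs <;> first | rfl | omega
    · simp only [dif_neg h', mul_zero]
      split_ifs <;> first | rfl | omega
  · simp only [dif_neg h, zero_mul]
    split_ifs <;> first | rfl | omega

noncomputable def liftPath (i j s : ℕ) : D :=
  if i = 0 then
    dPath BD n (if j = 0 then n else j) +
      (-1 : k) ^ s • dPath BD (n + 1) (if j = 0 then n + 1 else j)
  else dPath BD i j

variable {BD} in
theorem liftPath_mul_liftPath (hn : 2 ≤ n)
    (hD : ∀ b a : DIdx n, BD b * BD a = (dMul b a).elim 0 BD) {i j s i' j' t : ℕ}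
    (hb : i ≤ j ∧ j ≤ i + 1 ∧ j ≤ n - 1 ∧ s ≤ 1 ∧ (s = 1 → i = 0))
    (ha : i' ≤ j' ∧ j' ≤ i' + 1 ∧ j' ≤ n - 1 ∧ t ≤ 1 ∧ (t = 1 → i' = 0)) :
    liftPath BD i j s * liftPath BD i' j' t =
      if i = j' ∧ (i' = j' ∨ i = j) then liftPath BD i' j ((t + s) % 2) else 0 := by
  have hn1 : n ≠ 1 := by omega
  have hn0 : n ≠ 0 := by omega
  rcases Nat.eq_zero_or_pos i with rfl | hi <;> rcases Nat.eq_zero_or_pos i' with rfl | hi'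
  · obtain rfl | rfl : j' = 0 ∨ j' = 1 := by omega
    · simp [liftPath, mul_add, add_mul, dPath_mul_dPath hD, smul_smul, ← pow_add,
        ← neg_one_pow_eq_pow_mod_two (R := k)]
    · simp [liftPath, mul_add, add_mul, dPath_mul_dPath hD, hn1, hn0]
  · simp only [liftPath, ↓reduceIte, hi'.ne', add_mul, smul_mul_assoc, dPath_mul_dPath hD]
    rw [if_neg (by omega), if_neg (by omega), if_neg (by omega), smul_zero, add_zero]
  · obtain rfl : s = 0 := by omega
    obtain rfl | rfl : j' = 0 ∨ j' = 1 := by omega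
    · simp only [liftPath, ↓reduceIte, hi.ne', mul_add, mul_smul_comm, dPath_mul_dPath hD,
        true_or, and_true]
      rw [if_neg (by omega), if_neg (by omega), smul_zero, add_zero]
    · by_cases hc : i = 1 ∧ j = 1
      · obtain ⟨rfl, rfl⟩ := hc
        simp [liftPath, mul_add, dPath_mul_dPath hD, hn1, ← neg_one_pow_eq_pow_mod_two (R := k)]
      · simp only [liftPath, ↓reduceIte, hi.ne', one_ne_zero, mul_add, mul_smul_comm,
          dPath_mul_dPath hD]
        rw [if_neg (by omega), if_neg (by omega), if_neg (by omega), smul_zero, add_zero]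
  · obtain rfl : s = 0 := by omega
    obtain rfl : t = 0 := by omega
    simp [liftPath, hi.ne', hi'.ne', dPath_mul_dPath hD]

end D

section B

variable {B : Type*} [Ring B] [Algebra k B] (BB : Module.Basis (BIdx n) k B)

noncomputable def bPath (i j s : ℕ) : B :=
  if h : i ≤ j ∧ j ≤ i + 1 ∧ j ≤ n - 1 ∧ s ≤ 1 ∧ (s = 1 → i = 0) then BB ⟨i, j, s, h⟩ else 0

theorem basis_eq_bPath {i j s : ℕ} (h) : BB ⟨i, j, s, h⟩ = bPath BB i j s := by
  rw [bPath, dif_pos h]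

/-- `if n ≤ j then 0 else j` projects the vertices `w₀^±` of `D` to `w₀`. -/
noncomputable def descendPath (i j : ℕ) : B :=
  if n ≤ i then
    (2⁻¹ : k) • (bPath BB 0 (if n ≤ j then 0 else j) 0 +
      (if i = n then 1 else -1 : k) • bPath BB 0 (if n ≤ j then 0 else j) 1)
  else bPath BB i j 0

end B

variable {B : Type*} [Ring B] [Algebra k B] (BB : Module.Basis (BIdx n) k B)
  {D : Type*} [Ring D] [Algebra k D] (BD : Module.Basis (DIdx n) k D)

noncomputable def liftMap : B →ₗ[k] D :=
  BB.constr k fun x => liftPath BD x.i x.j x.s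

noncomputable def descendMap : D →ₗ[k] B :=
  BD.constr k fun d => descendPath BB d.i d.j

theorem liftMap_basis (x : BIdx n) : liftMap BB BD (BB x) = liftPath BD x.i x.j x.s :=
  BB.constr_basis k _ x

theorem liftMap_bPath {i j s : ℕ}
    (h : i ≤ j ∧ j ≤ i + 1 ∧ j ≤ n - 1 ∧ s ≤ 1 ∧ (s = 1 → i = 0)) :
    liftMap BB BD (bPath BB i j s) = liftPath BD i j s := by
  rw [← basis_eq_bPath BB h, liftMap_basis]

theorem descendMap_dPath {i j : ℕ}
    (h : (i = j ∧ ((1 ≤ i ∧ i ≤ n - 1) ∨ i = n ∨ i = n + 1)) ∨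
      (j = 1 ∧ (i = n ∨ i = n + 1)) ∨ (2 ≤ j ∧ j ≤ n - 1 ∧ i = j - 1)) :
    descendMap BB BD (dPath BD i j) = descendPath BB i j := by
  rw [← basis_eq_dPath BD h, descendMap, Module.Basis.constr_basis]

theorem liftMap_basis_mul (hn : 2 ≤ n)
    (hB : ∀ b a : BIdx n, BB b * BB a = (bMul b a).elim 0 BB)
    (hD : ∀ b a : DIdx n, BD b * BD a = (dMul b a).elim 0 BD) (x y : BIdx n) :
    liftMap BB BD (BB x * BB y) = liftMap BB BD (BB x) * liftMap BB BD (BB y) := by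
  rw [hB, liftMap_basis, liftMap_basis, liftPath_mul_liftPath hn hD x.h y.h, bMul]
  split_ifs <;> simp [liftMap_basis]

variable [CharZero k]

theorem descendMap_liftMap_basis (hn : 2 ≤ n) (x : BIdx n) :
    descendMap BB BD (liftMap BB BD (BB x)) = BB x := by
  obtain ⟨i, j, s, h⟩ := x
  rw [liftMap_basis, basis_eq_bPath]
  dsimp only
  rcases Nat.eq_zero_or_pos i with rfl | hi
  · rw [liftPath, if_pos rfl, map_add, map_smul, descendMap_dPath BB BD (by split_ifs <;> omega),
      descendMap_dPath BB BD (by split_ifs <;> omega)]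
    have hn1 : ¬n ≤ 1 := by omega
    rcases (show j = 0 ∨ j = 1 by omega) with rfl | rfl <;>
    rcases (show s = 0 ∨ s = 1 by omega) with rfl | rfl <;>
    · simp only [descendPath, hn1, le_refl, Nat.le_succ, n.succ_ne_self, ↓reduceIte,
        one_ne_zero]
      module
  · obtain rfl : s = 0 := by omega
    rw [liftPath, if_neg hi.ne', descendMap_dPath BB BD (by omega), descendPath,
      if_neg (by omega)]

theorem liftMap_descendMap_basis (hn : 2 ≤ n) (d : DIdx n) :
    liftMap BB BD (descendMap BB BD (BD d)) = BD d := by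
  obtain ⟨i, j, h⟩ := d
  rw [descendMap, Module.Basis.constr_basis, basis_eq_dPath]
  dsimp only
  by_cases hi : n ≤ i
  · rw [descendPath, if_pos hi, map_smul, map_add, map_smul,
      liftMap_bPath BB BD (by split_ifs <;> omega), liftMap_bPath BB BD (by split_ifs <;> omega)]
    have hn1 : ¬n ≤ 1 := by omega
    rcases (show n = i ∨ n + 1 = i by omega) with rfl | rfl <;>
    rcases (show 1 = j ∨ n = j ∨ n + 1 = j by omega) with rfl | rfl | rfl <;>
    try (exfalso; omega)
    all_goals
      simp only [liftPath, hn1, le_refl, Nat.le_succ, n.succ_ne_self, ↓reduceIte, one_ne_zero]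
      module
  · rw [descendPath, if_neg hi, liftMap_bPath BB BD (by omega), liftPath, if_neg (by omega)]

theorem exists_algEquiv_apply_basis (hn : 2 ≤ n)
    (hB : ∀ b a : BIdx n, BB b * BB a = (bMul b a).elim 0 BB)
    (hD : ∀ b a : DIdx n, BD b * BD a = (dMul b a).elim 0 BD) :
    ∃ Φ : B ≃ₐ[k] D, ∀ x, Φ (BB x) = liftPath BD x.i x.j x.s :=
  ⟨(LinearEquiv.ofLinearMap (liftMap BB BD) (descendMap BB BD)
      (BD.ext (liftMap_descendMap_basis BB BD hn))
      (BB.ext (descendMap_liftMap_basis BB BD hn))).toAlgEquivOfBasis BB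
      (liftMap_basis_mul BB BD hn hB hD),
    liftMap_basis BB BD⟩

end SkewGentle

/-- **The skew-gentle algebra `B` is isomorphic to the type `D_{n+1}` algebra.**
The skew-gentle algebra `B` (loop `ε` at `w₀` with `ε² = e_{w₀}`, chain of arrows
`r_i : w_{i-1} → w_i` with `r_{i+1} r_i = 0`) is isomorphic as a `k`-algebra to
the path algebra `D` of the linearly oriented quiver of type `D_{n+1}` modulo all paths
of length two, via `e_{w₀} ↦ e_{w₀⁺} + e_{w₀⁻}`, `ε ↦ e_{w₀⁺} − e_{w₀⁻}`,
`r₁ ↦ a⁺ + a⁻`, and the identity on the remaining idempotents and arrows. -/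
theorem skew_gentle_iso_Dn
    (k : Type*) [Field k] [CharZero k]
    (n : ℕ) (hn : 2 ≤ n)
    (B : Type*) [Ring B] [Algebra k B]
    (BB : Module.Basis (BIdx n) k B)
    (hB : ∀ b a : BIdx n, BB b * BB a = (bMul b a).elim 0 BB)
    (D : Type*) [Ring D] [Algebra k D]
    (BD : Module.Basis (DIdx n) k D)
    (hD : ∀ b a : DIdx n, BD b * BD a = (dMul b a).elim 0 BD) :
    ∃ Φ : B ≃ₐ[k] D,
      Φ (BB ⟨0, 0, 0, by omega⟩) = BD ⟨n, n, by omega⟩ + BD ⟨n + 1, n + 1, by omega⟩ ∧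
      Φ (BB ⟨0, 0, 1, by omega⟩) = BD ⟨n, n, by omega⟩ - BD ⟨n + 1, n + 1, by omega⟩ ∧
      Φ (BB ⟨0, 1, 0, by omega⟩) = BD ⟨n, 1, by omega⟩ + BD ⟨n + 1, 1, by omega⟩ ∧
      (∀ (x : ℕ) (h1 : 1 ≤ x) (h2 : x ≤ n - 1),
        Φ (BB ⟨x, x, 0, by omega⟩) = BD ⟨x, x, by omega⟩) ∧
      (∀ (i : ℕ) (h1 : 2 ≤ i) (h2 : i ≤ n - 1),
        Φ (BB ⟨i - 1, i, 0, by omega⟩) = BD ⟨i - 1, i, by omega⟩) := by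
  obtain ⟨Φ, hΦ⟩ := SkewGentle.exists_algEquiv_apply_basis BB BD hn hB hD
  refine ⟨Φ, ?_, ?_, ?_, fun x hx _ => ?_, fun i hi _ => ?_⟩
  iterate 3 simp [hΦ, SkewGentle.liftPath, SkewGentle.basis_eq_dPath, sub_eq_add_neg]
  · rw [hΦ, SkewGentle.liftPath, if_neg (show x ≠ 0 by omega), SkewGentle.basis_eq_dPath]
  · rw [hΦ, SkewGentle.liftPath, if_neg (show i - 1 ≠ 0 by omega), SkewGentle.basis_eq_dPath]
end

section
/- Let k be a field of characteristic 0. Let C be the k-algebra given by the quiver with vertices x₀, x₁, x₂, x₃, chain arrows a₁ : x₀ → x₁, a₂ : x₁ → x₂, a₃ : x₂ → x₃ and a loop ε at x₃, subject to the single relation ε² = e_{x₃}. Then C is isomorphic as a k-algebra to the path algebra (with no relations) of the quiver of type D₅ with vertices y₀, y₁, y₂, y₊, y₋ and arrows b₁ : y₀ → y₁, b₂ : y₁ → y₂, c₊ : y₂ → y₊, c₋ : y₂ → y₋. -/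
/-! Since `2` is invertible, `e₊ = (e_{x₃} + ε)/2` and `e₋ = (e_{x₃} - ε)/2` are orthogonal
idempotents with sum `e_{x₃}`, so the vertex `x₃` splits into two vertices `y₊, y₋` and the loop
disappears: `ε = e₊ - e₋`. Concretely, a path of `C` ending at `x₃` is sent to the sum (for
`ε`-exponent `0`) or difference (exponent `1`) of the corresponding paths of `D₅` ending at
`y₊` and `y₋`; the inverse map halves. -/

structure CIdx : Type where
  i : ℕ
  j : ℕ
  s : ℕ
  h : i ≤ j ∧ j ≤ 3 ∧ s ≤ 1 ∧ (s = 1 → j = 3)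

def cMul (b a : CIdx) : Option CIdx :=
  if hc : b.i = a.j then
    some ⟨a.i, b.j, (a.s + b.s) % 2, by have ha := a.h; have hb := b.h; omega⟩
  else none

structure D5Idx : Type where
  i : ℕ
  j : ℕ
  h : i ≤ j ∧ j ≤ 4 ∧ (i = j ∨ i ≤ 2)

def d5Mul (b a : D5Idx) : Option D5Idx :=
  if hc : b.i = a.j then
    some ⟨a.i, b.j, by have ha := a.h; have hb := b.h; omega⟩
  else none

theorem Module.Basis.constr_map_mul {ι R A B : Type*} [CommSemiring R] [Semiring A] [Semiring B]
    [Algebra R A] [Algebra R B] (b : Module.Basis ι R A) (μ : ι → ι → Option ι)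
    (hb : ∀ i j, b i * b j = (μ i j).elim 0 b) (g : ι → B)
    (hg : ∀ i j, g i * g j = (μ i j).elim 0 g) (x y : A) :
    b.constr R g (x * y) = b.constr R g x * b.constr R g y := by
  refine (LinearMap.map_mul_iff _).2 (b.ext fun i => b.ext fun j => ?_) x y
  have : b.constr R g ((μ i j).elim 0 b) = (μ i j).elim 0 g := by cases μ i j <;> simp
  simp [hb, hg, this]

/-- A multiplicative bijection automatically preserves `1`. -/
def LinearEquiv.toAlgEquivOfMapMul {R A B : Type*} [CommSemiring R] [Semiring A] [Semiring B]
    [Algebra R A] [Algebra R B] (l : A ≃ₗ[R] B) (map_mul : ∀ x y, l (x * y) = l x * l y) :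
    A ≃ₐ[R] B :=
  AlgEquiv.ofLinearEquiv l (MulEquiv.mk' l.toEquiv map_mul).map_one map_mul

def cToD5 {D : Type*} [Ring D] (BD : D5Idx → D) (x : CIdx) : D :=
  if h2 : x.j ≤ 2 then BD ⟨x.i, x.j, by have := x.h; omega⟩
  else if x.s = 0 then
    BD ⟨x.i, 3, by have := x.h; omega⟩
      + BD ⟨if x.i = 3 then 4 else x.i, 4, by have := x.h; split <;> omega⟩
  else
    BD ⟨x.i, 3, by have := x.h; omega⟩
      - BD ⟨if x.i = 3 then 4 else x.i, 4, by have := x.h; split <;> omega⟩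

def d5ToC (k : Type*) {C : Type*} [Field k] [Ring C] [Module k C]
    (BC : CIdx → C) (y : D5Idx) : C :=
  if h2 : y.j ≤ 2 then BC ⟨y.i, y.j, 0, by have := y.h; omega⟩
  else if h3 : y.j = 3 then
    (2⁻¹ : k) • (BC ⟨y.i, 3, 0, by have := y.h; omega⟩ + BC ⟨y.i, 3, 1, by have := y.h; omega⟩)
  else
    (2⁻¹ : k) • (BC ⟨if y.i = 4 then 3 else y.i, 3, 0, by have := y.h; split <;> omega⟩
      - BC ⟨if y.i = 4 then 3 else y.i, 3, 1, by have := y.h; split <;> omega⟩)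

theorem d5ToC_comp_cToD5 {k C D : Type*} [Field k] [NeZero (2 : k)] [Ring C] [Module k C]
    [Ring D] [Module k D] (BC : Module.Basis CIdx k C) (BD : Module.Basis D5Idx k D) :
    BD.constr k (d5ToC k BC) ∘ₗ BC.constr k (cToD5 BD) = LinearMap.id := by
  refine BC.ext fun ⟨i, j, s, h1, h2, h3, h4⟩ => ?_
  interval_cases j <;> interval_cases i <;> interval_cases s <;>
    first
      | omega
      | (simp [cToD5, d5ToC]; done)
      | (simp [cToD5, d5ToC]
         match_scalars <;> field_simp <;> ring)

theorem cToD5_comp_d5ToC {k C D : Type*} [Field k] [NeZero (2 : k)] [Ring C] [Module k C]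
    [Ring D] [Module k D] (BC : Module.Basis CIdx k C) (BD : Module.Basis D5Idx k D) :
    BC.constr k (cToD5 BD) ∘ₗ BD.constr k (d5ToC k BC) = LinearMap.id := by
  refine BD.ext fun ⟨i, j, h1, h2, h3⟩ => ?_
  interval_cases j <;> interval_cases i <;>
    first
      | omega
      | (simp [cToD5, d5ToC]; done)
      | (simp [cToD5, d5ToC]
         match_scalars <;> field_simp <;> ring)

theorem cToD5_mul {D : Type*} [Ring D] (BD : D5Idx → D)
    (hD : ∀ b a : D5Idx, BD b * BD a = (d5Mul b a).elim 0 BD) (b a : CIdx) :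
    cToD5 BD b * cToD5 BD a = (cMul b a).elim 0 (cToD5 BD) := by
  obtain ⟨bi, bj, bs, hb1, hb2, hb3, hb4⟩ := b
  obtain ⟨ai, aj, as, ha1, ha2, ha3, ha4⟩ := a
  interval_cases aj <;> interval_cases ai <;> interval_cases as <;>
    interval_cases bj <;> interval_cases bi <;> interval_cases bs <;>
    first
      | omega
      | simp [cMul, cToD5, d5Mul, hD, mul_add, add_mul, sub_eq_add_neg]

/-- **The algebra `C` is isomorphic to the path algebra of `D₅`.**  The path algebra of
the quiver `x₀ → x₁ → x₂ → x₃` with a loop `ε` at `x₃`, modulo the single relation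
`ε² = e_{x₃}`, is isomorphic as a `k`-algebra to the path algebra (with no relations) of
the quiver of type `D₅` with vertices `y₀, y₁, y₂, y₊, y₋` and arrows `b₁ : y₀ → y₁`,
`b₂ : y₁ → y₂`, `c₊ : y₂ → y₊`, `c₋ : y₂ → y₋`. -/
theorem loop_algebra_iso_D5
    (k : Type*) [Field k] [CharZero k]
    (C : Type*) [Ring C] [Algebra k C]
    (BC : Module.Basis CIdx k C)
    (hC : ∀ b a : CIdx, BC b * BC a = (cMul b a).elim 0 BC)
    (D : Type*) [Ring D] [Algebra k D]
    (BD : Module.Basis D5Idx k D)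
    (hD : ∀ b a : D5Idx, BD b * BD a = (d5Mul b a).elim 0 BD) :
    Nonempty (C ≃ₐ[k] D) :=
  let e : C ≃ₗ[k] D :=
    .ofLinearMap _ _ (cToD5_comp_d5ToC BC BD) (d5ToC_comp_cToD5 BC BD)
  ⟨e.toAlgEquivOfMapMul (BC.constr_map_mul cMul hC _ (cToD5_mul BD hD))⟩
end
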